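/- arXiv:1610.05577 — 6 statements merged into one kernel-verified Lean document; each statement's English description precedes it below -/
import Mathlib

section
/- A d × d nonnegative integer matrix M is primitive (i.e., some power of M has all entries positive) if and only if there exists an integer k ≤ d² − 2d + 2 such that M^k has all entries positive. -/
open List

/-- Extension of a substitution to words. -/
def applyW {A : Type*} (σ : A → List A) (w : List A) : List A := w.flatMap σ

/-- `σⁿ` as a map on letters. -/
def powL {A : Type*} (σ : A → List A) (n : ℕ) (a : A) : List A := (applyW σ)^[n] [a]

/-- `σⁿ` as a map on words. -/
def iterW {A : Type*} (σ : A → List A) (n : ℕ) (w : List A) : List A := (applyW σ)^[n] w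

/-- A substitution is non-erasing if no letter maps to the empty word. -/
def NonErasing {A : Type*} (σ : A → List A) : Prop := ∀ a, σ a ≠ []

/-- A substitution is primitive if some power maps any letter to a word containing
every letter. -/
def PrimitiveSub {A : Type*} (σ : A → List A) : Prop :=
  ∃ k : ℕ, ∀ b c : A, b ∈ powL σ k c

/-- `σ` is prolongable on `a` if `σ a = a u` with `u` nonempty. -/
def Prolongable {A : Type*} (σ : A → List A) (a : A) : Prop :=
  ∃ u : List A, u ≠ [] ∧ σ a = a :: u

/-- `|σⁿ|`, the maximal length of the image of a letter under `σⁿ`. -/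
def maxLen {A : Type*} [Fintype A] (σ : A → List A) (n : ℕ) : ℕ :=
  Finset.univ.sup fun a => (powL σ n a).length

/-- `⟨σⁿ⟩`, the minimal length of the image of a letter under `σⁿ`. -/
def minLen {A : Type*} [Fintype A] [Nonempty A] (σ : A → List A) (n : ℕ) : ℕ :=
  Finset.univ.inf' Finset.univ_nonempty fun a => (powL σ n a).length

/-- The factor `x_{[i,j)}` of a two-sided sequence. -/
def seg {A : Type*} (x : ℤ → A) (i j : ℤ) : List A :=
  (List.range (j - i).toNat).map fun t => x (i + t)

/-- `w` is a factor of the two-sided sequence `x`. -/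
def FactorOf {A : Type*} (x : ℤ → A) (w : List A) : Prop :=
  ∃ i : ℤ, w = seg x i (i + w.length)

/-- The language of a substitution: words occurring in some `σⁿ(c)`. -/
def LangOf {A : Type*} (σ : A → List A) (w : List A) : Prop :=
  ∃ n : ℕ, ∃ c : A, w <:+: powL σ n c

/-- The map `f^{(1)}` associated with the substitution `τ` and the sequence `x`;
the map `f^{(p)}` of `σ` is obtained as `F (powL σ p) x`. -/
def F {A : Type*} (τ : A → List A) (x : ℤ → A) (i : ℤ) : ℤ :=
  if 0 ≤ i then (((seg x 0 i).flatMap τ).length : ℤ)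
  else -(((seg x i 0).flatMap τ).length : ℤ)

/-- `x` is a (two-sided) fixed point of `τ`:  `τ (x i)` is the block of `x`
between `f^{(1)}(i)` and `f^{(1)}(i+1)`. -/
def IsFixedPoint {A : Type*} (τ : A → List A) (x : ℤ → A) : Prop :=
  ∀ i : ℤ, seg x (F τ x i) (F τ x (i + 1)) = τ (x i)

/-- `x` is an admissible fixed point of `τ`: it is a fixed point and the word
`x₋₁x₀` occurs in some `τⁿ(c)`. -/
def Admissible {A : Type*} (τ : A → List A) (x : ℤ → A) : Prop :=
  IsFixedPoint τ x ∧ ∃ n : ℕ, ∃ c : A, [x (-1), x 0] <:+: powL τ n c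

/-- `τ` is recognizable on `x` with constant `L`. -/
def RecogWith {A : Type*} (τ : A → List A) (x : ℤ → A) (L : ℤ) : Prop :=
  0 < L ∧ ∀ i m : ℤ,
    seg x (m - L) (m + L + 1) = seg x (F τ x i - L) (F τ x i + L + 1) →
    ∃ j : ℤ, m = F τ x j ∧ x i = x j

/-- `x` is `k`-power-free: no nonempty word `w` has `w^k` as a factor of `x`. -/
def PowerFree {A : Type*} (x : ℤ → A) (k : ℕ) : Prop :=
  ∀ w : List A, w ≠ [] → ¬ FactorOf x (List.replicate k w).flatten

/-- `x` is recurrent: every factor occurs infinitely many times. -/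
def Recurrent {A : Type*} (x : ℤ → A) : Prop :=
  ∀ w : List A, FactorOf x w → ∀ N : ℤ, ∃ i : ℤ, N ≤ i ∧ w = seg x i (i + w.length)

/-- Number of occurrences of `u` in `w`. -/
def occCount {A : Type*} [DecidableEq A] (u w : List A) : ℕ :=
  (List.range (w.length + 1)).countP fun i => decide (u <+: w.drop i)

/-- `r` is a return word to `u` in `x`. -/
def ReturnWordOf {A : Type*} [DecidableEq A] (x : ℤ → A) (u r : List A) : Prop :=
  FactorOf x (r ++ u) ∧ u <+: (r ++ u) ∧ occCount u (r ++ u) = 2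

/-- `r` is a return word to `u` in the language of `σ`. -/
def ReturnWordLang {A : Type*} [DecidableEq A] (σ : A → List A) (u r : List A) : Prop :=
  LangOf σ (r ++ u) ∧ u <+: (r ++ u) ∧ occCount u (r ++ u) = 2

/-- `x` is linearly recurrent with constant `K`. -/
def LinRec {A : Type*} [DecidableEq A] (x : ℤ → A) (K : ℕ) : Prop :=
  Recurrent x ∧ ∀ u r : List A, FactorOf x u → ReturnWordOf x u r → r.length ≤ K * u.length

/-- `x` is aperiodic (not periodic). -/
def AperiodicSeq {A : Type*} (x : ℤ → A) : Prop :=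
  ¬ ∃ p : ℤ, 0 < p ∧ ∀ i : ℤ, x (i + p) = x i

/-- Factor complexity of `x`. -/
noncomputable def complexity {A : Type*} (x : ℤ → A) (n : ℕ) : ℕ :=
  Set.ncard {w : List A | FactorOf x w ∧ w.length = n}

namespace Wielandt

variable {d : ℕ}

/-- Walks in the digraph of a nonnegative integer matrix. -/
def IsWalk (N : Matrix (Fin d) (Fin d) ℕ) (w : ℕ → Fin d) (k : ℕ) : Prop :=
  ∀ t, t < k → 0 < N (w t) (w (t + 1))

lemma mul_entry_pos {N P : Matrix (Fin d) (Fin d) ℕ} {i j : Fin d} :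
    0 < (N * P) i j ↔ ∃ c, 0 < N i c ∧ 0 < P c j := by
  constructor
  · intro h
    by_contra hc
    push_neg at hc
    rw [Matrix.mul_apply] at h
    have hz : ∀ c ∈ Finset.univ, N i c * P c j = 0 := by
      intro c _
      rcases Nat.eq_zero_or_pos (N i c) with h1 | h1
      · rw [h1, Nat.zero_mul]
      · rcases Nat.eq_zero_or_pos (P c j) with h2 | h2
        · rw [h2, Nat.mul_zero]
        · exact absurd (hc c h1) (by omega)
    rw [Finset.sum_eq_zero hz] at h
    exact lt_irrefl 0 h
  · rintro ⟨c, h1, h2⟩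
    rw [Matrix.mul_apply]
    exact Finset.sum_pos' (fun c _ => Nat.zero_le _) ⟨c, Finset.mem_univ c, Nat.mul_pos h1 h2⟩

lemma pow_entry_pos {N : Matrix (Fin d) (Fin d) ℕ} {k : ℕ} {i j : Fin d} :
    0 < (N ^ k) i j ↔ ∃ w : ℕ → Fin d, IsWalk N w k ∧ w 0 = i ∧ w k = j := by
  induction k generalizing j with
  | zero =>
    rw [pow_zero]
    constructor
    · intro h
      have hij : i = j := by
        by_contra hne
        rw [Matrix.one_apply_ne hne] at h
        exact lt_irrefl 0 h
      exact ⟨fun _ => i, fun t ht => absurd ht (Nat.not_lt_zero t), rfl, hij ▸ rfl⟩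
    · rintro ⟨w, -, rfl, rfl⟩
      rw [Matrix.one_apply_eq]
      norm_num
  | succ k IH =>
    rw [pow_succ, mul_entry_pos]
    constructor
    · rintro ⟨c, h1, h2⟩
      obtain ⟨w, hw, hw0, hwk⟩ := IH.mp h1
      refine ⟨fun t => if t ≤ k then w t else j, ?_, ?_, ?_⟩
      · intro t ht
        dsimp only
        split_ifs with h3 h4 h4
        · exact hw t (by omega)
        · have : t = k := by omega
          subst this
          rw [hwk]; exact h2
        · exact absurd h3 (by omega)
        · exact absurd h3 (by omega)
      · dsimp only; rw [if_pos (Nat.zero_le k)]; exact hw0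
      · dsimp only; rw [if_neg (by omega)]
    · rintro ⟨w, hw, hw0, hwk⟩
      exact ⟨w k, IH.mpr ⟨w, fun t ht => hw t (by omega), hw0, rfl⟩,
        hwk ▸ hw k (Nat.lt_succ_self k)⟩

lemma pow_mul_pos {N : Matrix (Fin d) (Fin d) ℕ} {a b : ℕ} {i c j : Fin d}
    (h1 : 0 < (N ^ a) i c) (h2 : 0 < (N ^ b) c j) : 0 < (N ^ (a + b)) i j := by
  rw [pow_add]
  exact mul_entry_pos.mpr ⟨c, h1, h2⟩

lemma loop_pow {N : Matrix (Fin d) (Fin d) ℕ} {c : Fin d} (h : 0 < N c c) :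
    ∀ t, 0 < (N ^ t) c c
  | 0 => by rw [pow_zero, Matrix.one_apply_eq]; norm_num
  | (t + 1) => by
      rw [pow_succ]
      exact mul_entry_pos.mpr ⟨c, loop_pow h t, h⟩

lemma splice {N : Matrix (Fin d) (Fin d) ℕ} {w : ℕ → Fin d} {k p q : ℕ}
    (hw : IsWalk N w k) (hpq : p < q) (hqk : q ≤ k) (heq : w p = w q) :
    0 < (N ^ (k - (q - p))) (w 0) (w k) := by
  apply pow_entry_pos.mpr
  refine ⟨fun t => if t ≤ p then w t else w (t + (q - p)), ?_, ?_, ?_⟩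
  · intro t ht
    dsimp only
    split_ifs with h1 h2 h2
    · exact hw t (by omega)
    · -- t ≤ p, ¬ t+1 ≤ p, so t = p
      have h3 : t = p := by omega
      subst h3
      rw [heq, show t + 1 + (q - t) = q + 1 from by omega]
      exact hw q (by omega)
    · exact absurd h1 (by omega)
    · rw [show t + 1 + (q - p) = (t + (q - p)) + 1 from by omega]
      exact hw (t + (q - p)) (by omega)
  · dsimp only; rw [if_pos (Nat.zero_le p)]
  · dsimp only
    split_ifs with h
    · have hk : k = q := by omega
      have h2 : k - (q - p) = p := by omega
      rw [h2, heq, hk]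
    · congr 1
      omega

lemma all_pos_mono {N : Matrix (Fin d) (Fin d) ℕ} {n : ℕ} (hn : 1 ≤ n)
    (h : ∀ i j, 0 < (N ^ n) i j) : ∀ k, n ≤ k → ∀ i j, 0 < (N ^ k) i j := by
  have hrow : ∀ i : Fin d, ∃ c, 0 < N i c := by
    intro i
    obtain ⟨n', rfl⟩ : ∃ n', n = n' + 1 := ⟨n - 1, by omega⟩
    have h2 := h i i
    rw [pow_succ'] at h2
    obtain ⟨c, hc, -⟩ := mul_entry_pos.mp h2
    exact ⟨c, hc⟩
  intro k hk
  obtain ⟨e, rfl⟩ : ∃ e, k = n + e := ⟨k - n, by omega⟩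
  clear hk
  induction e with
  | zero => exact h
  | succ e IH =>
    intro i j
    show 0 < (N ^ ((n + e) + 1)) i j
    rw [pow_succ']
    obtain ⟨c, hc⟩ := hrow i
    exact mul_entry_pos.mpr ⟨c, hc, IH c j⟩

lemma card_image_walk {w : ℕ → Fin d} {n : ℕ}
    (hinj : ∀ p q, p < q → q < n → w p ≠ w q) :
    ((Finset.range n).image w).card = n := by
  have hInj : Set.InjOn w ↑(Finset.range n) := by
    intro x hx y hy hxy
    simp only [Finset.coe_range, Set.mem_Iio] at hx hy
    rcases lt_trichotomy x y with h | h | h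
    · exact absurd hxy (hinj x y h hy)
    · exact h
    · exact absurd hxy.symm (hinj y x h hx)
  rw [Finset.card_image_of_injOn hInj, Finset.card_range]

lemma dvd_of_no_short_cycles {N : Matrix (Fin d) (Fin d) ℕ}
    (hg : ∀ ℓ (c : Fin d), 1 ≤ ℓ → ℓ < d → ¬ 0 < (N ^ ℓ) c c) :
    ∀ ℓ (c : Fin d), 0 < (N ^ ℓ) c c → d ∣ ℓ := by
  intro ℓ
  induction ℓ using Nat.strong_induction_on with
  | _ ℓ IH =>
    intro c h
    rcases Nat.eq_zero_or_pos ℓ with rfl | hl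
    · exact dvd_zero d
    obtain ⟨w, hw, hw0, hwk⟩ := pow_entry_pos.mp h
    by_cases hinj : ∀ p q, p < q → q < ℓ → w p ≠ w q
    · have hcard := card_image_walk hinj
      have h2 := Finset.card_le_univ ((Finset.range ℓ).image w)
      rw [hcard] at h2
      rw [Fintype.card_fin] at h2
      have h3 : ¬ ℓ < d := fun hlt => hg ℓ c hl hlt h
      have h4 : ℓ = d := by omega
      exact h4 ▸ dvd_refl d
    · push_neg at hinj
      obtain ⟨p, q, hpq, hq, heq⟩ := hinj
      have hinner : 0 < (N ^ (q - p)) (w p) (w p) := by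
        apply pow_entry_pos.mpr
        refine ⟨fun u => w (p + u), fun u hu => hw (p + u) (by omega), rfl, ?_⟩
        show w (p + (q - p)) = w p
        rw [show p + (q - p) = q from by omega]
        exact heq.symm
      have houter : 0 < (N ^ (ℓ - (q - p))) c c := by
        have h5 := splice hw hpq (by omega) heq
        rwa [hw0, hwk] at h5
      obtain ⟨x, hx⟩ := IH (q - p) (by omega) _ hinner
      obtain ⟨y, hy⟩ := IH (ℓ - (q - p)) (by omega) c houter
      exact ⟨x + y, by rw [Nat.mul_add]; omega⟩

end Wielandt

open Wielandt in
theorem stmt2 (d : ℕ) (M : Matrix (Fin d) (Fin d) ℕ) :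
    (∃ m : ℕ, 1 ≤ m ∧ ∀ i j, 0 < (M ^ m) i j) ↔
      ∃ k : ℕ, 1 ≤ k ∧ k ≤ d ^ 2 - 2 * d + 2 ∧ ∀ i j, 0 < (M ^ k) i j := by
  constructor
  · rintro ⟨m, hm1, hm⟩
    refine ⟨d ^ 2 - 2 * d + 2, by omega, le_rfl, ?_⟩
    match d, M, hm with
    | 0, M, hm => intro i j; exact i.elim0
    | 1, M, hm =>
      have h1 : ∀ i j : Fin 1, 0 < (M ^ 1) i j := by
        intro i j
        rw [pow_one]
        obtain ⟨n', rfl⟩ : ∃ n', m = n' + 1 := ⟨m - 1, by omega⟩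
        have h2 := hm i j
        rw [pow_succ'] at h2
        obtain ⟨c, hc, -⟩ := mul_entry_pos.mp h2
        have hcj : c = j := Subsingleton.elim c j
        rwa [hcj] at hc
      have he : (1 : ℕ) ^ 2 - 2 * 1 + 2 = 2 := by norm_num
      rw [he]
      exact all_pos_mono le_rfl h1 2 (by norm_num)
    | (e + 2), M, hm =>
      have hup := all_pos_mono hm1 hm
      -- the girth s
      have hex : ∃ ℓ, 1 ≤ ℓ ∧ ∃ c : Fin (e + 2), 0 < (M ^ ℓ) c c :=
        ⟨m, hm1, ⟨0, by omega⟩, hm _ _⟩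
      set s := Nat.find hex with hs_def
      obtain ⟨hs1, c, hc⟩ := Nat.find_spec hex
      have hsmin : ∀ ℓ, 1 ≤ ℓ → ℓ < s → ∀ c' : Fin (e + 2), ¬ 0 < (M ^ ℓ) c' c' := by
        intro ℓ h1 h2 c' hcc
        exact Nat.find_min hex h2 ⟨h1, c', hcc⟩
      have hsp : 0 < s := hs1
      -- s ≤ e + 1 : otherwise every cycle length is divisible by e+2
      have hse : s ≤ e + 1 := by
        by_contra hgt
        push_neg at hgt
        have hg : ∀ ℓ (c' : Fin (e + 2)), 1 ≤ ℓ → ℓ < e + 2 → ¬ 0 < (M ^ ℓ) c' c' :=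
          fun ℓ c' h1 h2 => hsmin ℓ h1 (by omega) c'
        have hdvd := dvd_of_no_short_cycles hg
        have hd1 := hdvd m c (hm c c)
        have hd2 := hdvd (m + 1) c (hup (m + 1) (by omega) c c)
        have hd3 : (e + 2) ∣ 1 := by
          have h6 := Nat.dvd_sub hd2 hd1
          rwa [show m + 1 - m = 1 from by omega] at h6
        exact absurd (Nat.le_of_dvd one_pos hd3) (by omega)
      -- the short cycle γ
      obtain ⟨γ, hγ, hγ0, hγs⟩ := pow_entry_pos.mp hc
      have hγinj : ∀ p q, p < q → q < s → γ p ≠ γ q := by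
        intro p q hpq hq hne
        have hcyc : 0 < (M ^ (q - p)) (γ p) (γ p) := by
          apply pow_entry_pos.mpr
          refine ⟨fun u => γ (p + u), fun u hu => hγ (p + u) (by omega), rfl, ?_⟩
          show γ (p + (q - p)) = γ p
          rw [show p + (q - p) = q from by omega]
          exact hne.symm
        exact hsmin (q - p) (by omega) (by omega) (γ p) hcyc
      set C : Finset (Fin (e + 2)) := (Finset.range s).image γ with hC
      have hCcard : C.card = s := card_image_walk hγinj
      -- the periodic walk around the cycle
      set Γ : ℕ → Fin (e + 2) := fun u => γ (u % s) with hΓ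
      have hΓedge : ∀ u, 0 < M (Γ u) (Γ (u + 1)) := by
        intro u
        have h1 : u % s < s := Nat.mod_lt _ hsp
        have hdm := Nat.div_add_mod u s
        have h2 : Γ (u + 1) = γ (u % s + 1) := by
          by_cases h : u % s + 1 = s
          · have h3 : u + 1 = s * (u / s + 1) := by rw [Nat.mul_add, Nat.mul_one]; omega
            show γ ((u + 1) % s) = γ (u % s + 1)
            rw [h3, Nat.mul_mod_right, h, hγ0, hγs]
          · have h3 : u + 1 = (u % s + 1) + s * (u / s) := by omega
            show γ ((u + 1) % s) = γ (u % s + 1)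
            rw [h3, Nat.add_mul_mod_self_left, Nat.mod_eq_of_lt (by omega)]
        rw [h2]
        exact hγ (u % s) h1
      have hΓwalk : ∀ u r, 0 < (M ^ r) (Γ u) (Γ (u + r)) := by
        intro u r
        induction r with
        | zero =>
          rw [pow_zero]
          show 0 < (1 : Matrix (Fin (e + 2)) (Fin (e + 2)) ℕ) (Γ u) (Γ u)
          rw [Matrix.one_apply_eq]
          norm_num
        | succ r IH =>
          have h2 : 0 < (M ^ 1) (Γ (u + r)) (Γ (u + r + 1)) := by
            rw [pow_one]; exact hΓedge (u + r)
          exact pow_mul_pos IH h2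
      have hΓmem : ∀ u, Γ u ∈ C :=
        fun u => Finset.mem_image.mpr ⟨u % s, Finset.mem_range.mpr (Nat.mod_lt _ hsp), rfl⟩
      have hloop : ∀ c' ∈ C, 0 < (M ^ s) c' c' := by
        intro c' hc'
        obtain ⟨t, ht, rfl⟩ := Finset.mem_image.mp hc'
        rw [Finset.mem_range] at ht
        have h1 := hΓwalk t s
        have e1 : Γ t = γ t := by show γ (t % s) = γ t; rw [Nat.mod_eq_of_lt ht]
        have e2 : Γ (t + s) = γ t := by
          show γ ((t + s) % s) = γ t
          rw [Nat.add_mod_right, Nat.mod_eq_of_lt ht]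
        rw [e1, e2] at h1
        exact h1
      -- every pair is connected in exactly (e+2-s) + s*(e+1) steps
      have hN : ∀ i j, 0 < (M ^ ((e + 2 - s) + s * (e + 1))) i j := by
        intro i j
        -- reach the cycle in exactly e+2-s steps
        have haex : ∃ a, ∃ c' ∈ C, 0 < (M ^ a) i c' := ⟨m, Γ 0, hΓmem 0, hm i (Γ 0)⟩
        set a := Nat.find haex with ha_def
        obtain ⟨c1, hc1C, hc1⟩ := Nat.find_spec haex
        have hamin : ∀ a' , a' < a → ¬ ∃ c' ∈ C, 0 < (M ^ a') i c' :=
          fun a' h => Nat.find_min haex h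
        have ha : a ≤ e + 2 - s := by
          obtain ⟨w, hw, hw0, hwk⟩ := pow_entry_pos.mp hc1
          have hnotC : ∀ t, t < a → w t ∉ C := by
            intro t ht htC
            exact hamin t ht ⟨w t, htC,
              pow_entry_pos.mpr ⟨w, fun u hu => hw u (by omega), hw0, rfl⟩⟩
          have hwinj : ∀ p q, p < q → q < a → w p ≠ w q := by
            intro p q hpq hq hne
            apply hamin (a - (q - p)) (by omega)
            have h5 := splice hw hpq (by omega) hne
            rw [hw0, hwk] at h5
            exact ⟨c1, hc1C, h5⟩
          have hdisj : Disjoint ((Finset.range a).image w) C := by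
            rw [Finset.disjoint_left]
            rintro x hx hxC
            obtain ⟨t, ht, rfl⟩ := Finset.mem_image.mp hx
            exact hnotC t (Finset.mem_range.mp ht) hxC
          have hwcard := card_image_walk hwinj
          have hle := Finset.card_le_univ (((Finset.range a).image w) ∪ C)
          rw [Finset.card_union_of_disjoint hdisj, hwcard, hCcard, Fintype.card_fin] at hle
          omega
        obtain ⟨t, ht, hγt⟩ := Finset.mem_image.mp hc1C
        rw [Finset.mem_range] at ht
        have hext : 0 < (M ^ (e + 2 - s)) i (Γ (t + (e + 2 - s - a))) := by
          have h1 : Γ t = c1 := by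
            show γ (t % s) = c1; rw [Nat.mod_eq_of_lt ht]; exact hγt
          have h2 := hΓwalk t (e + 2 - s - a)
          rw [h1] at h2
          have h3 := pow_mul_pos hc1 h2
          rwa [show a + (e + 2 - s - a) = e + 2 - s from by omega] at h3
        set c2 := Γ (t + (e + 2 - s - a)) with hc2
        have hc2C : c2 ∈ C := hΓmem _
        -- from the cycle vertex c2, reach j in exactly s*(e+1) steps
        have hBloop : 0 < (M ^ s) c2 c2 := hloop c2 hc2C
        have hbex : ∃ b, 0 < ((M ^ s) ^ b) c2 j := by
          refine ⟨m, ?_⟩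
          rw [← pow_mul]
          exact hup (s * m) (Nat.le_mul_of_pos_left m hsp) c2 j
        set b := Nat.find hbex with hb_def
        have hb := Nat.find_spec hbex
        have hbmin : ∀ b', b' < b → ¬ 0 < ((M ^ s) ^ b') c2 j :=
          fun b' h => Nat.find_min hbex h
        have hble : b ≤ e + 1 := by
          obtain ⟨w, hw, hw0, hwk⟩ := pow_entry_pos.mp hb
          have hwinj : ∀ p q, p < q → q < b + 1 → w p ≠ w q := by
            intro p q hpq hq hne
            apply hbmin (b - (q - p)) (by omega)
            have h5 := splice hw hpq (by omega) hne
            rwa [hw0, hwk] at h5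
          have hwcard := card_image_walk hwinj
          have hle := Finset.card_le_univ ((Finset.range (b + 1)).image w)
          rw [hwcard, Fintype.card_fin] at hle
          omega
        have hpad : 0 < ((M ^ s) ^ (e + 1)) c2 j := by
          have h1 : 0 < ((M ^ s) ^ (e + 1 - b)) c2 c2 := loop_pow hBloop (e + 1 - b)
          have h2 := pow_mul_pos h1 hb
          rwa [show (e + 1 - b) + b = e + 1 from by omega] at h2
        rw [← pow_mul] at hpad
        exact pow_mul_pos hext hpad
      -- arithmetic: (e+2-s) + s*(e+1) ≤ (e+2)^2 - 2*(e+2) + 2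
      have hN1 : 1 ≤ (e + 2 - s) + s * (e + 1) := by
        have h1 : 1 * 1 ≤ s * (e + 1) := Nat.mul_le_mul hs1 (by omega)
        omega
      have hKle : (e + 2 - s) + s * (e + 1) ≤ (e + 2) ^ 2 - 2 * (e + 2) + 2 := by
        have h1 : s * (e + 1) = s * e + s := by ring
        have h2 : s * e ≤ (e + 1) * e := Nat.mul_le_mul_right e hse
        have h3 : (e + 1) * e = e * e + e := by ring
        have h4 : (e + 2) ^ 2 = e * e + 4 * e + 4 := by ring
        omega
      exact all_pos_mono hN1 hN _ hKle
  · rintro ⟨k, hk1, -, hk⟩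
    exact ⟨k, hk1, hk⟩
end

section
/- Let σ : A* → A* be a non-erasing morphism on a finite alphabet A with d = #A, whose incidence matrix is such that M_σ^{d²} has all positive entries. Then for all n ∈ ℕ, |σⁿ| ≤ |σ^{d²}| · ⟨σⁿ⟩, where |τ| = max_a |τ(a)| and ⟨τ⟩ = min_a |τ(a)|. -/
open List

lemma iter_flatMap {A : Type*} (σ : A → List A) (n : ℕ) (w : List A) :
    (applyW σ)^[n] w = w.flatMap (powL σ n) := by
  induction n generalizing w with
  | zero =>
    show w = w.flatMap fun a => (applyW σ)^[0] [a]
    simp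
  | succ n ih =>
    rw [Function.iterate_succ_apply, ih]
    show (applyW σ w).flatMap _ = _
    rw [applyW, List.flatMap_assoc]
    congr 1
    funext a
    have : powL σ (n + 1) a = (applyW σ)^[n] (σ a) := by
      rw [powL, Function.iterate_succ_apply]
      congr 1
      simp [applyW]
    rw [this, ih]

lemma sum_map_count {A : Type*} [Fintype A] [DecidableEq A] (w : List A) (g : A → ℕ) :
    (w.map g).sum = ∑ b, w.count b * g b := by
  induction w with
  | nil => simp
  | cons a w ih =>
    simp only [List.map_cons, List.sum_cons, ih, List.count_cons]
    rw [Finset.sum_congr rfl (fun b _ => add_mul (w.count b) _ (g b)),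
      Finset.sum_add_distrib]
    simp [add_comm]

lemma cntFM {A : Type*} [DecidableEq A] (f : A → List A) (l : List A) (a : A) :
    (l.flatMap f).count a = (l.map (fun b => (f b).count a)).sum := by
  induction l with
  | nil => simp
  | cons b l ih => simp [List.flatMap_cons, List.count_append, ih]

lemma count_powL {A : Type*} [Fintype A] [DecidableEq A] (σ : A → List A) (k : ℕ)
    (a c : A) :
    (powL σ k c).count a = ((Matrix.of fun a b => (σ b).count a) ^ k) a c := by
  induction k generalizing c with
  | zero =>
    simp [powL, Matrix.one_apply, List.count_singleton', eq_comm]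
  | succ k ih =>
    have h1 : powL σ (k + 1) c = (σ c).flatMap (powL σ k) := by
      rw [powL, Function.iterate_succ_apply]
      have : applyW σ [c] = σ c := by simp [applyW]
      rw [this, iter_flatMap]
    rw [h1, pow_succ, Matrix.mul_apply, cntFM, sum_map_count]
    exact Finset.sum_congr rfl fun b _ => by rw [ih b, mul_comm]; rfl

theorem stmt3 {A : Type*} [Fintype A] [Nonempty A] [DecidableEq A]
    (σ : A → List A) (hσ : NonErasing σ)
    (hM : ∀ a b : A,
      0 < (((Matrix.of fun a b => (σ b).count a) ^ (Fintype.card A ^ 2)) a b)) :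
    ∀ n : ℕ, maxLen σ n ≤ maxLen σ (Fintype.card A ^ 2) * minLen σ n := by
  intro n
  set K := Fintype.card A ^ 2 with hK
  obtain ⟨c, -, hc2⟩ := Finset.exists_mem_eq_inf' (Finset.univ_nonempty (α := A))
    (fun a => (powL σ n a).length)
  have hmin : minLen σ n = (powL σ n c).length := hc2
  rw [maxLen]
  apply Finset.sup_le
  intro a _
  have hmem : a ∈ powL σ K c := by
    have h := hM a c
    rw [← count_powL] at h
    exact List.count_pos_iff.mp h
  obtain ⟨l₁, l₂, hsplit⟩ := List.append_of_mem hmem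
  have e1 : powL σ (n + K) c = (powL σ K c).flatMap (powL σ n) := by
    rw [powL, Function.iterate_add_apply]
    exact iter_flatMap σ n _
  have e2 : powL σ (n + K) c = (powL σ n c).flatMap (powL σ K) := by
    rw [powL, add_comm, Function.iterate_add_apply]
    exact iter_flatMap σ K _
  have h1 : (powL σ n a).length ≤ (powL σ (n + K) c).length := by
    rw [e1, hsplit]
    simp only [List.flatMap_append, List.flatMap_cons, List.length_append]
    omega
  have h2 : (powL σ (n + K) c).length ≤ maxLen σ K * (powL σ n c).length := by
    rw [e2, List.length_flatMap]
    have := List.sum_le_card_nsmul ((powL σ n c).map fun b => (powL σ K b).length)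
      (maxLen σ K) ?_
    · simpa [mul_comm] using this
    · intro x hx
      obtain ⟨b, -, rfl⟩ := List.mem_map.mp hx
      exact Finset.le_sup (f := fun a => (powL σ K a).length) (Finset.mem_univ b)
  rw [hmin]
  exact le_trans h1 h2
end

section
/- Let σ : A* → A* be a primitive morphism on a finite alphabet A prolongable on a letter a (σ(a) = au with u nonempty). Then for every n > (#A)², every word of length 2 occurring in σ^m(a) for some m ∈ ℕ already occurs in σⁿ(a). -/
open List

/-!
Let `P n` be the set of length-two factors of `σⁿ(a)`. Since `σⁿ(a)` is a prefix of
`σⁿ⁺¹(a)`, the sets `P n` increase. As `σ` is non-erasing, a length-two factor of `σ(z)` lies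
in `σ(bc)` for some length-two factor `bc` of `z`, so for `n ≥ 1` the set `P (n + 1)` is a
function of `P n`. Hence once two consecutive sets agree the sequence is constant, and a
strictly increasing chain of nonempty subsets of `A × A` has fewer than `#A²` steps.
-/

section Stabilization

variable {α : Type*} [Finite α] {s : ℕ → Set α}

theorem Monotone.exists_lt_card_succ_eq (hs : Monotone s) (h0 : (s 0).Nonempty) :
    ∃ k < Nat.card α, s (k + 1) = s k := by
  by_contra! hstrict
  have growth : ∀ k ≤ Nat.card α, k + 1 ≤ (s k).ncard := by
    intro k hk
    induction k with
    | zero => exact (Set.ncard_pos).mpr h0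
    | succ k ih =>
      have hssub : s k ⊂ s (k + 1) :=
        (hs k.le_succ).ssubset_of_ne (hstrict k (by omega)).symm
      have := Set.ncard_lt_ncard hssub
      have := ih (by omega)
      omega
  have := growth _ le_rfl
  have := Set.ncard_le_card (s (Nat.card α))
  omega

theorem Monotone.subset_of_card_le (g : Set α → Set α) (hs : Monotone s)
    (h0 : (s 0).Nonempty) (hg : ∀ n, s (n + 1) = g (s n)) (m : ℕ) {n : ℕ}
    (hn : Nat.card α ≤ n) : s m ⊆ s n := by
  obtain ⟨k, hk, hfix⟩ := hs.exists_lt_card_succ_eq h0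
  have stable : ∀ j, k ≤ j → s j = s k := by
    intro j hj
    induction j, hj using Nat.le_induction with
    | base => rfl
    | succ j _ ih => rw [hg, ih, ← hg, hfix]
  rcases le_total m n with hmn | hnm
  · exact hs hmn
  · rw [stable m (by omega), stable n (by omega)]

end Stabilization

theorem List.infix_append_or_infix_append {α : Type*} {w s t u : List α}
    (hw : w.length ≤ t.length + 1) (h : w <:+: s ++ (t ++ u)) :
    w <:+: s ++ t ∨ w <:+: t ++ u := by
  rcases infix_append_iff_ne_nil.mp h with h | h | ⟨l₁, l₂, hl₁, -, rfl, hs, ht⟩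
  · exact .inl (infix_append_of_infix_left h)
  · exact .inr h
  · have hlen : l₂.length ≤ t.length := by
      have := length_pos_iff.mpr hl₁
      simp only [length_append] at hw
      omega
    have ht' : l₂ <+: t := prefix_of_prefix_length_le ht (prefix_append t u) hlen
    exact .inl (infix_append_iff.mpr (.inr (.inr ⟨l₁, l₂, rfl, hs, ht'⟩)))

section TwoFactors

variable {A : Type*} (σ : A → List A)

def twoFactors (z : List A) : Set (A × A) := {p | [p.1, p.2] <:+: z}

theorem twoFactors_mono {z z' : List A} (h : z <:+: z') : twoFactors z ⊆ twoFactors z' :=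
  fun _ hp => IsInfix.trans hp h

theorem twoFactors_nonempty {z : List A} (hz : 2 ≤ z.length) : (twoFactors z).Nonempty := by
  match z, hz with
  | b :: c :: z, _ => exact ⟨(b, c), [], z, rfl⟩

theorem applyW_cons (b : A) (z : List A) : applyW σ (b :: z) = σ b ++ applyW σ z := by
  simp [applyW]

theorem applyW_infix_applyW {w z : List A} (h : w <:+: z) : applyW σ w <:+: applyW σ z := by
  obtain ⟨s, t, rfl⟩ := h
  simp only [applyW, flatMap_append]
  exact infix_append _ _ _

theorem applyW_prefix_applyW {w z : List A} (h : w <+: z) : applyW σ w <+: applyW σ z := by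
  obtain ⟨t, rfl⟩ := h
  simp only [applyW, flatMap_append]
  exact prefix_append _ _

theorem exists_mem_twoFactors_of_infix_applyW (hne : NonErasing σ) {w : List A}
    (hw : w.length = 2) {z : List A} (hz : 2 ≤ z.length) (h : w <:+: applyW σ z) :
    ∃ p ∈ twoFactors z, w <:+: σ p.1 ++ σ p.2 := by
  induction z with
  | nil => simp at hz
  | cons b z ih =>
    rcases z with _ | ⟨c, z⟩
    · simp at hz
    rw [applyW_cons, applyW_cons] at h
    have hc := length_pos_iff.mpr (hne c)
    rcases infix_append_or_infix_append (by omega) h with h | h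
    · exact ⟨(b, c), ⟨[], z, rfl⟩, h⟩
    rcases z with _ | ⟨d, z⟩
    · have h' : w <:+: σ c := by simpa [applyW] using h
      exact ⟨(b, c), ⟨[], [], rfl⟩, infix_append_of_infix_right h'⟩
    obtain ⟨p, hp, hpw⟩ := ih (by simp) (by rwa [applyW_cons])
    exact ⟨p, twoFactors_mono (infix_cons (infix_refl _)) hp, hpw⟩

theorem twoFactors_applyW (hne : NonErasing σ) {z : List A} (hz : 2 ≤ z.length) :
    twoFactors (applyW σ z) = ⋃ p ∈ twoFactors z, twoFactors (σ p.1 ++ σ p.2) := by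
  ext q
  simp only [Set.mem_iUnion, exists_prop]
  constructor
  · exact exists_mem_twoFactors_of_infix_applyW σ hne (by simp) hz
  · rintro ⟨p, hp, hq⟩
    have hp' : σ p.1 ++ σ p.2 <:+: applyW σ z := by
      simpa [applyW] using applyW_infix_applyW σ hp
    exact twoFactors_mono hp' hq

section Prolongable

variable {σ} {a : A}

theorem iterW_prefix_iterW_succ (ha : Prolongable σ a) (n : ℕ) :
    iterW σ n [a] <+: iterW σ (n + 1) [a] := by
  induction n with
  | zero =>
    obtain ⟨u, -, hau⟩ := ha
    exact ⟨u, by simp [iterW, applyW, hau]⟩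
  | succ n ih =>
    simpa only [iterW, Function.iterate_succ_apply'] using applyW_prefix_applyW σ ih

theorem iterW_prefix_iterW (ha : Prolongable σ a) {m n : ℕ} (h : m ≤ n) :
    iterW σ m [a] <+: iterW σ n [a] := by
  induction n, h using Nat.le_induction with
  | base => exact prefix_refl _
  | succ n _ ih => exact ih.trans (iterW_prefix_iterW_succ ha n)

theorem two_le_length_iterW_succ (ha : Prolongable σ a) (n : ℕ) :
    2 ≤ (iterW σ (n + 1) [a]).length := by
  have hlen := (iterW_prefix_iterW ha (Nat.le_add_left 1 n)).length_le
  obtain ⟨u, hu, hau⟩ := ha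
  have h1 : iterW σ 1 [a] = a :: u := by simp [iterW, applyW, hau]
  rw [h1, length_cons] at hlen
  have := length_pos_iff.mpr hu
  omega

theorem twoFactors_iterW_subset [Fintype A] (hne : NonErasing σ) (ha : Prolongable σ a)
    (m : ℕ) {n : ℕ} (hn : Fintype.card A ^ 2 < n) :
    twoFactors (iterW σ m [a]) ⊆ twoFactors (iterW σ n [a]) := by
  set s : ℕ → Set (A × A) := fun j => twoFactors (iterW σ (j + 1) [a])
  have hmono : Monotone s :=
    monotone_nat_of_le_succ fun j => twoFactors_mono (iterW_prefix_iterW_succ ha _).isInfix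
  have hstep : ∀ j, s (j + 1) = ⋃ p ∈ s j, twoFactors (σ p.1 ++ σ p.2) := fun j => by
    simp only [s, iterW, Function.iterate_succ_apply' _ (j + 1)]
    exact twoFactors_applyW σ hne (two_le_length_iterW_succ ha j)
  obtain ⟨k, rfl⟩ : ∃ k, n = k + 1 := ⟨n - 1, by omega⟩
  have hcard : Nat.card (A × A) ≤ k := by
    rw [Nat.card_prod, Nat.card_eq_fintype_card, ← sq]
    omega
  have hsub := hmono.subset_of_card_le (fun P => ⋃ p ∈ P, twoFactors (σ p.1 ++ σ p.2))
    (twoFactors_nonempty (two_le_length_iterW_succ ha 0))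
    hstep m hcard
  exact (twoFactors_mono (iterW_prefix_iterW_succ ha m).isInfix).trans hsub

end Prolongable

end TwoFactors

theorem stmt5_general {A : Type*} [Fintype A] (σ : A → List A)
    (hne : NonErasing σ) (a : A) (ha : Prolongable σ a) :
    ∀ n : ℕ, Fintype.card A ^ 2 < n →
      ∀ w : List A, w.length = 2 → (∃ m : ℕ, w <:+: iterW σ m [a]) →
        w <:+: iterW σ n [a] := by
  rintro n hn w hw ⟨m, hm⟩
  obtain ⟨x, y, rfl⟩ := length_eq_two.mp hw
  exact twoFactors_iterW_subset hne ha m hn (show (x, y) ∈ twoFactors _ from hm)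

theorem stmt5 {A : Type*} [Fintype A] (σ : A → List A) (hσ : PrimitiveSub σ)
    (hne : NonErasing σ) (a : A) (ha : Prolongable σ a) :
    ∀ n : ℕ, Fintype.card A ^ 2 < n →
      ∀ w : List A, w.length = 2 → (∃ m : ℕ, w <:+: iterW σ m [a]) →
        w <:+: iterW σ n [a] :=
  stmt5_general σ hne a ha
end

section
/- Let σ : A* → A* be a primitive morphism prolongable on a letter a ∈ A, and let n ∈ ℕ. If some word of length 2 of the language of σ does not occur in σⁿ(a), then there exist n pairwise distinct words u₁, …, uₙ of length 2, each in the language of σ, such that for every i ≤ n, u_i occurs in σⁱ(a) but not in σ^{i−1}(a). In particular, every length-2 word of the language occurs in σⁿ(a) as soon as n > (#A)². -/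
open List

/-! For non-erasing `σ` (forced by primitivity and prolongability), the factors of length two
of `σ(w)` lie in images `σ(b)` of letters of `w` or `σ(bc)` of factors `bc` of `w`, and when
`|w| ≥ 2` every letter of `w` lies in a factor of length two. Hence the factors of length two of
`σⁱ⁺¹(a)` are controlled by those of `σⁱ(a)`: once the increasing sequence of these sets stalls,
it stays constant, and by primitivity it then contains every word of length two of the
language. So each step before that adds a new word of length two, and there are at most `(#A)²`
of them. -/

lemma injective_of_mem_sdiff_of_monotone {α : Type*} {S : ℕ → Set α} (hS : Monotone S)
    {n : ℕ} {u : Fin n → α} (hu : ∀ i : Fin n, u i ∈ S (i + 1) \ S i) : Function.Injective u := by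
  intro i j hij
  by_contra hne
  rcases Fin.lt_or_lt_of_ne hne with h | h
  · exact (hu j).2 (hij ▸ hS (Nat.succ_le_of_lt h) (hu i).1)
  · exact (hu i).2 (hij ▸ hS (Nat.succ_le_of_lt h) (hu j).1)

section Substitution

variable {A : Type*} {σ : A → List A}

lemma applyW_singleton (b : A) : applyW σ [b] = σ b := List.flatMap_singleton σ b

lemma iterW_succ (n : ℕ) (w : List A) : iterW σ (n + 1) w = iterW σ n (applyW σ w) :=
  Function.iterate_succ_apply _ n w

lemma iterW_succ' (n : ℕ) (w : List A) : iterW σ (n + 1) w = applyW σ (iterW σ n w) :=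
  Function.iterate_succ_apply' _ n w

lemma iterW_iterW (m n : ℕ) (w : List A) : iterW σ m (iterW σ n w) = iterW σ (m + n) w :=
  (Function.iterate_add_apply _ m n w).symm

lemma iterW_infix {v w : List A} (h : v <:+: w) (n : ℕ) : iterW σ n v <:+: iterW σ n w := by
  induction n with
  | zero => exact h
  | succ n ih =>
    rw [iterW_succ', iterW_succ']
    exact ih.flatMap σ

lemma iterW_prefix {v w : List A} (h : v <+: w) (n : ℕ) : iterW σ n v <+: iterW σ n w := by
  induction n with
  | zero => exact h
  | succ n ih =>
    rw [iterW_succ', iterW_succ']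
    exact ih.flatMap σ

lemma length_le_length_applyW (hne : NonErasing σ) (w : List A) :
    w.length ≤ (applyW σ w).length := by
  rw [applyW, List.length_flatMap]
  simpa using List.length_le_sum_of_one_le (w.map fun b => (σ b).length) fun n hn => by
    obtain ⟨b, -, rfl⟩ := List.mem_map.mp hn
    exact List.length_pos_iff.mpr (hne b)

lemma length_le_length_iterW (hne : NonErasing σ) (n : ℕ) (w : List A) :
    w.length ≤ (iterW σ n w).length := by
  induction n with
  | zero => exact le_rfl
  | succ n ih =>
    rw [iterW_succ']
    exact ih.trans (length_le_length_applyW hne _)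

lemma exists_infix_iterW_of_langOf (hσ : PrimitiveSub σ) {w : List A} (hw : LangOf σ w)
    (a : A) : ∃ m, w <:+: iterW σ m [a] := by
  obtain ⟨m, c, hwc⟩ := hw
  obtain ⟨k, hk⟩ := hσ
  refine ⟨m + k, hwc.trans ?_⟩
  rw [← iterW_iterW]
  exact iterW_infix ((singleton_infix_iff c _).mpr (hk c a)) m

lemma pair_infix_append {x y : A} {s t : List A} (h : [x, y] <:+: s ++ t) :
    [x, y] <:+: s ∨ [x, y] <:+: t ∨ (x ∈ s.getLast? ∧ y ∈ t.head?) := by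
  obtain ⟨p, q, h⟩ := h
  rw [List.append_assoc, List.append_eq_append_iff] at h
  rcases h with ⟨r, rfl, hr⟩ | ⟨r, rfl, rfl⟩
  · rcases r with _ | ⟨z, _ | ⟨w, r⟩⟩
    · exact Or.inr (Or.inl ⟨[], q, by simp_all⟩)
    · simp only [cons_append, nil_append, cons.injEq] at hr
      obtain ⟨rfl, rfl⟩ := hr
      simp
    · simp only [cons_append, cons.injEq] at hr
      obtain ⟨rfl, rfl, rfl⟩ := hr
      exact Or.inl ⟨p, r, by simp⟩
  · exact Or.inr (Or.inl ⟨r, q, by simp⟩)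

lemma pair_infix_append_of_getLast?_of_head? {x y : A} {s t : List A} (hx : x ∈ s.getLast?)
    (hy : y ∈ t.head?) : [x, y] <:+: s ++ t := by
  obtain ⟨s', rfl⟩ := List.getLast?_eq_some_iff.mp hx
  obtain ⟨t', rfl⟩ := List.head?_eq_some_iff.mp hy
  exact ⟨s', t', by simp⟩

/-- Non-erasure leaves no gap between the images of consecutive letters of `w`. -/
lemma pair_infix_flatMap (hne : NonErasing σ) {x y : A} {w : List A}
    (h : [x, y] <:+: w.flatMap σ) :
    (∃ b ∈ w, [x, y] <:+: σ b) ∨ ∃ b c, [b, c] <:+: w ∧ [x, y] <:+: σ b ++ σ c := by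
  induction w with
  | nil => simp at h
  | cons b t ih =>
    rw [List.flatMap_cons] at h
    rcases pair_infix_append h with h | h | ⟨hx, hy⟩
    · exact Or.inl ⟨b, by simp, h⟩
    · rcases ih h with ⟨c, hc, hxy⟩ | ⟨c, d, hcd, hxy⟩
      · exact Or.inl ⟨c, List.mem_cons_of_mem b hc, hxy⟩
      · exact Or.inr ⟨c, d, hcd.trans (List.suffix_cons b t).isInfix, hxy⟩
    · rcases t with _ | ⟨c, t⟩
      · simp at hy
      · rw [List.flatMap_cons, List.head?_append_of_ne_nil _ (hne c)] at hy
        exact Or.inr ⟨b, c, ⟨[], t, rfl⟩, pair_infix_append_of_getLast?_of_head? hx hy⟩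

def pairFactors (w : List A) : Set (List A) := {v | v.length = 2 ∧ v <:+: w}

lemma pairFactors_mono {w w' : List A} (h : w <:+: w') : pairFactors w ⊆ pairFactors w' :=
  fun _ ⟨hv, hvw⟩ => ⟨hv, hvw.trans h⟩

lemma exists_mem_pairFactors_of_mem {w : List A} {b : A} (hw : 2 ≤ w.length) (hb : b ∈ w) :
    ∃ v ∈ pairFactors w, b ∈ v := by
  obtain ⟨p, q, rfl⟩ := List.append_of_mem hb
  rcases q with _ | ⟨c, q⟩
  · rcases List.eq_nil_or_concat p with rfl | ⟨p, c, rfl⟩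
    · simp at hw
    · exact ⟨[c, b], ⟨rfl, p, [], by simp⟩, by simp⟩
  · exact ⟨[b, c], ⟨rfl, p, q, by simp⟩, by simp⟩

lemma mem_of_pairFactors_subset {w w' : List A} (hw : 2 ≤ w.length)
    (h : pairFactors w ⊆ pairFactors w') {b : A} (hb : b ∈ w) : b ∈ w' := by
  obtain ⟨v, hv, hbv⟩ := exists_mem_pairFactors_of_mem hw hb
  exact (h hv).2.subset hbv

lemma pairFactors_applyW_subset (hne : NonErasing σ) {w w' : List A} (hw : 2 ≤ w.length)
    (h : pairFactors w ⊆ pairFactors w') :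
    pairFactors (applyW σ w) ⊆ pairFactors (applyW σ w') := by
  rintro v ⟨hv, hvw⟩
  obtain ⟨x, y, rfl⟩ := List.length_eq_two.mp hv
  refine ⟨hv, ?_⟩
  rcases pair_infix_flatMap hne hvw with ⟨b, hb, hxy⟩ | ⟨b, c, hbc, hxy⟩
  · exact hxy.trans (infix_flatMap_of_mem (mem_of_pairFactors_subset hw h hb) σ)
  · exact hxy.trans (by simpa [applyW] using (h ⟨rfl, hbc⟩).2.flatMap σ)

lemma pairFactors_iterW_subset (hne : NonErasing σ) {w w' : List A} (hw : 2 ≤ w.length)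
    (h : pairFactors w ⊆ pairFactors w') (n : ℕ) :
    pairFactors (iterW σ n w) ⊆ pairFactors (iterW σ n w') := by
  induction n with
  | zero => exact h
  | succ n ih =>
    rw [iterW_succ', iterW_succ']
    exact pairFactors_applyW_subset hne (hw.trans (length_le_length_iterW hne n w)) ih

lemma le_card_sq_of_injective [Fintype A] {n : ℕ} {u : Fin n → List A}
    (hu : Function.Injective u) (h2 : ∀ i, (u i).length = 2) : n ≤ Fintype.card A ^ 2 := by
  classical
  let v : Fin n → List.Vector A 2 := fun i => ⟨u i, h2 i⟩
  simpa [card_vector] using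
    Fintype.card_le_of_injective v fun i j h => hu (congrArg Subtype.val h)

namespace Prolongable

variable {a : A}

lemma nonErasing (ha : Prolongable σ a) (hσ : PrimitiveSub σ) : NonErasing σ := by
  obtain ⟨k, hk⟩ := hσ
  intro c hc
  rcases k with _ | k
  · obtain ⟨u, _, hu⟩ := ha
    have : a = c := by simpa [powL] using hk a c
    simp [← this, hu] at hc
  · have : powL σ (k + 1) c = [] := by
      rw [powL, Function.iterate_succ_apply, applyW, List.flatMap_singleton, hc]
      exact Function.iterate_fixed rfl k
    simpa [this] using hk a c

lemma iterW_prefix_iterW (ha : Prolongable σ a) {m n : ℕ} (h : m ≤ n) :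
    iterW σ m [a] <+: iterW σ n [a] := by
  induction n, h using Nat.le_induction with
  | base => exact List.prefix_rfl
  | succ n _ ih =>
    obtain ⟨u, _, hu⟩ := ha
    have : [a] <+: applyW σ [a] := ⟨u, by rw [applyW_singleton, hu]; rfl⟩
    rw [iterW_succ]
    exact ih.trans (iterW_prefix this n)

lemma two_le_length_iterW (ha : Prolongable σ a) (hne : NonErasing σ) (n : ℕ) :
    2 ≤ (iterW σ (n + 1) [a]).length := by
  obtain ⟨u, hu, hσa⟩ := ha
  rw [iterW_succ, applyW_singleton]
  refine le_trans ?_ (length_le_length_iterW hne n (σ a))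
  rw [hσa, List.length_cons]
  exact Nat.succ_le_succ (List.length_pos_iff.mpr hu)

lemma pairFactors_iterW_subset_of_stable (ha : Prolongable σ a) (hne : NonErasing σ) {i : ℕ}
    (h : pairFactors (iterW σ (i + 1) [a]) ⊆ pairFactors (iterW σ i [a])) (m : ℕ) :
    pairFactors (iterW σ m [a]) ⊆ pairFactors (iterW σ i [a]) := by
  have above : ∀ k, pairFactors (iterW σ (k + i) [a]) ⊆ pairFactors (iterW σ i [a]) := by
    intro k
    induction k with
    | zero => simp
    | succ k ih =>
      have step := pairFactors_iterW_subset hne (ha.two_le_length_iterW hne i) h k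
      rw [iterW_iterW, iterW_iterW, ← add_assoc] at step
      rw [Nat.add_right_comm]
      exact step.trans ih
  rcases le_or_gt m i with hm | hm
  · exact pairFactors_mono (ha.iterW_prefix_iterW hm).isInfix
  · simpa [Nat.sub_add_cancel hm.le] using above (m - i)

lemma exists_new_pairFactor (ha : Prolongable σ a) (hσ : PrimitiveSub σ) {w : List A}
    (hw : w.length = 2) (hwL : LangOf σ w) {n : ℕ} (hwn : ¬ w <:+: iterW σ n [a]) {i : ℕ}
    (hi : i < n) :
    ∃ v : List A, v.length = 2 ∧ v <:+: iterW σ (i + 1) [a] ∧ ¬ v <:+: iterW σ i [a] := by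
  by_contra! hstable
  obtain ⟨m, hm⟩ := exists_infix_iterW_of_langOf hσ hwL a
  have hwi := ha.pairFactors_iterW_subset_of_stable (ha.nonErasing hσ)
    (fun v hv => ⟨hv.1, hstable v hv.1 hv.2⟩) m ⟨hw, hm⟩
  exact hwn (hwi.2.trans (ha.iterW_prefix_iterW hi.le).isInfix)

lemma exists_injective_new_pairFactors (ha : Prolongable σ a) (hσ : PrimitiveSub σ)
    {w : List A} (hw : w.length = 2) (hwL : LangOf σ w) {n : ℕ}
    (hwn : ¬ w <:+: iterW σ n [a]) :
    ∃ u : Fin n → List A, Function.Injective u ∧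
      ∀ i : Fin n, (u i).length = 2 ∧ LangOf σ (u i) ∧
        u i <:+: iterW σ ((i : ℕ) + 1) [a] ∧ ¬ u i <:+: iterW σ (i : ℕ) [a] := by
  choose u hu2 hu1 hu0 using fun i : Fin n => ha.exists_new_pairFactor hσ hw hwL hwn i.2
  have hmono : Monotone fun m => {v | v <:+: iterW σ m [a]} :=
    fun _ _ hm _ hv => hv.trans (ha.iterW_prefix_iterW hm).isInfix
  exact ⟨u, injective_of_mem_sdiff_of_monotone hmono fun i => ⟨hu1 i, hu0 i⟩,
    fun i => ⟨hu2 i, ⟨i + 1, a, hu1 i⟩, hu1 i, hu0 i⟩⟩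

end Prolongable

end Substitution

theorem stmt6 {A : Type*} [Fintype A] (σ : A → List A) (hσ : PrimitiveSub σ)
    (a : A) (ha : Prolongable σ a) :
    (∀ n : ℕ,
      (∃ w : List A, w.length = 2 ∧ LangOf σ w ∧ ¬ w <:+: iterW σ n [a]) →
      ∃ u : Fin n → List A, Function.Injective u ∧
        ∀ i : Fin n, (u i).length = 2 ∧ LangOf σ (u i) ∧
          u i <:+: iterW σ ((i : ℕ) + 1) [a] ∧ ¬ u i <:+: iterW σ (i : ℕ) [a]) ∧
    (∀ n : ℕ, Fintype.card A ^ 2 < n →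
      ∀ w : List A, w.length = 2 → LangOf σ w → w <:+: iterW σ n [a]) := by
  refine ⟨fun n ⟨w, hw, hwL, hwn⟩ => ha.exists_injective_new_pairFactors hσ hw hwL hwn,
    fun n hn w hw hwL => ?_⟩
  by_contra hwn
  obtain ⟨u, hu, hu2⟩ := ha.exists_injective_new_pairFactors hσ hw hwL hwn
  exact hn.not_ge (le_card_sq_of_injective hu fun i => (hu2 i).1)
end

section
/- Let x ∈ A^ℤ be an aperiodic linearly recurrent sequence with constant K. Then x is (K+1)-power-free: there is no nonempty word u with u^{K+1} a factor of x. -/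
/-!
If `u ^ (K + 1)` occurs at `p` and `n = |u|`, then every factor `v` of length `n` occurs
somewhere in `(p, p + K n]`, i.e. inside that power: the block between two consecutive
occurrences of `v` is a return word, so they are at most `K n` apart. Hence every window of
length `n` of `x` is a conjugate of `u`. Two consecutive windows `c w` and `w d` are then
permutations of each other, which forces `c = d`; so `x` has period `n`.
-/

open List

section Words

variable {A : Type*}

/-- `FactorOf x v` unfolds to `∃ q, OccursAt x v q`. -/
def OccursAt (x : ℤ → A) (v : List A) (q : ℤ) : Prop :=
  v = seg x q (q + v.length)

section Seg

variable (x : ℤ → A)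

/- The cast `ℕ → ℤ` in the definition of `seg` elaborates as a lift of `range` to `List ℤ`
through the list monad; this puts `seg` back into plain `map` form. -/
theorem seg_eq_map (i j : ℤ) :
    seg x i j = (range (j - i).toNat).map fun t : ℕ => x (i + t) := by
  rw [seg, show (do let a ← range (j - i).toNat; pure (a : ℤ)) =
      (range (j - i).toNat).map (↑) from flatMap_pure_eq_map _ _, map_map]
  rfl

@[simp]
theorem length_seg (i j : ℤ) : (seg x i j).length = (j - i).toNat := by
  simp [seg_eq_map]

@[simp]
theorem getElem_seg (i j : ℤ) (t : ℕ) (h : t < (seg x i j).length) :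
    (seg x i j)[t] = x (i + t) := by
  simp [seg_eq_map]

theorem drop_seg (i j : ℤ) (t : ℕ) : (seg x i j).drop t = seg x (i + t) j := by
  apply ext_getElem
  · simp only [length_drop, length_seg]
    omega
  · intro k _ _
    simp only [getElem_drop, getElem_seg]
    push_cast
    ring_nf

theorem seg_append {i j k : ℤ} (hij : i ≤ j) (hjk : j ≤ k) :
    seg x i j ++ seg x j k = seg x i k := by
  apply ext_getElem
  · simp only [length_append, length_seg]
    omega
  · intro t h _
    rw [getElem_seg, getElem_append]
    split_ifs with ht
    · rw [getElem_seg]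
    · simp only [getElem_seg, length_seg] at ht ⊢
      congr 1
      omega

theorem seg_eq_cons {i j : ℤ} (hij : i < j) : seg x i j = x i :: seg x (i + 1) j := by
  rw [← seg_append x (Int.le_add_one le_rfl) hij]
  simp [seg_eq_map]

theorem seg_eq_concat {i j : ℤ} (hij : i ≤ j) : seg x i (j + 1) = seg x i j ++ [x j] := by
  rw [← seg_append x hij (Int.le_add_one le_rfl)]
  simp [seg_eq_map]

theorem occursAt_iff {v : List A} {q : ℤ} :
    OccursAt x v q ↔ ∀ (j : ℕ) (hj : j < v.length), x (q + j) = v[j] := by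
  refine ⟨fun h j hj => ?_, fun h => ext_getElem (by simp) fun j h₁ h₂ => ?_⟩
  · rw [← getElem_seg x q (q + v.length) j (by simp; omega)]
    exact (getElem_of_eq h hj).symm
  · rw [getElem_seg, h]

theorem occursAt_seg (i j : ℤ) : OccursAt x (seg x i j) i := by
  rw [occursAt_iff]
  simp

theorem OccursAt.eq_of_length_eq {x : ℤ → A} {v w : List A} {q : ℤ} (hv : OccursAt x v q)
    (hw : OccursAt x w q) (h : v.length = w.length) : v = w := by
  rw [hv, hw, h]

theorem prefix_seg_iff {v : List A} {i j : ℤ} :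
    v <+: seg x i j ↔ v.length ≤ (j - i).toNat ∧ OccursAt x v i := by
  simp only [prefix_iff_getElem, occursAt_iff, length_seg, getElem_seg]
  exact ⟨fun ⟨hlen, h⟩ => ⟨by omega, fun k hk => (h k hk).symm⟩,
    fun ⟨hlen, h⟩ => ⟨by omega, fun k hk => (h k hk).symm⟩⟩

end Seg

theorem occCount_eq_card [DecidableEq A] (u w : List A) :
    occCount u w = ({t ∈ Finset.range (w.length + 1) | u <+: w.drop t} : Finset ℕ).card :=
  Nat.count_eq_card_filter_range _ _

namespace LinRec

variable [DecidableEq A] {x : ℤ → A} {K : ℕ} {v : List A}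

theorem exists_occursAt_Ioc (hlr : LinRec x K) {q : ℤ} (hq : OccursAt x v q) :
    ∃ q', q < q' ∧ q' ≤ q + K * v.length ∧ OccursAt x v q' := by
  obtain ⟨q', ⟨hqq', hq'⟩, hleast⟩ :=
    Int.exists_least_of_bdd (P := fun z => q < z ∧ OccursAt x v z) ⟨q, fun z hz => hz.1.le⟩
      (by obtain ⟨z, hz, hocc⟩ := hlr.1 v ⟨q, hq⟩ (q + 1); exact ⟨z, by omega, hocc⟩)
  refine ⟨q', hqq', ?_, hq'⟩
  set r := seg x q q'
  have hrv : r ++ v = seg x q (q' + v.length) := by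
    rw [← seg_append x hqq'.le (by omega : q' ≤ q' + v.length), ← hq']
  have hoccurrences : {t ∈ Finset.range ((r ++ v).length + 1) | v <+: (r ++ v).drop t} =
      {0, (q' - q).toNat} := by
    ext t
    simp only [hrv, drop_seg, prefix_seg_iff, Finset.mem_filter, Finset.mem_range, length_seg,
      Finset.mem_insert, Finset.mem_singleton]
    constructor
    · rintro ⟨hrange, hlen, ht⟩
      by_cases ht0 : t = 0
      · exact Or.inl ht0
      · have := hleast _ ⟨by omega, ht⟩
        omega
    · rintro (rfl | rfl)
      · exact ⟨by omega, by omega, by simpa using hq⟩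
      · exact ⟨by omega, by omega, by rwa [Int.toNat_of_nonneg (by omega), add_sub_cancel]⟩
  have hret : ReturnWordOf x v r :=
    ⟨hrv ▸ ⟨q, occursAt_seg x _ _⟩, hrv ▸ (prefix_seg_iff x).2 ⟨by omega, hq⟩,
      by rw [occCount_eq_card, hoccurrences, Finset.card_pair (by omega)]⟩
  have := hlr.2 v r ⟨q, hq⟩ hret
  simp only [r, length_seg] at this
  omega

theorem exists_occursAt_Ioc_of_le (hlr : LinRec x K) {i p : ℤ} (hi : OccursAt x v i)
    (hip : i ≤ p) : ∃ q, p < q ∧ q ≤ p + K * v.length ∧ OccursAt x v q := by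
  obtain ⟨q₁, ⟨hq₁p, hq₁⟩, hgreatest⟩ :=
    Int.exists_greatest_of_bdd (P := fun z => z ≤ p ∧ OccursAt x v z)
      ⟨p, fun z hz => hz.1⟩ ⟨i, hip, hi⟩
  obtain ⟨q, hq₁q, hq, hocc⟩ := hlr.exists_occursAt_Ioc hq₁
  refine ⟨q, ?_, by omega, hocc⟩
  by_contra! hqp
  exact absurd (hgreatest q ⟨hqp, hocc⟩) (not_le.2 hq₁q)

end LinRec

theorem getElem?_flatten_replicate (u : List A) {k i : ℕ} (h : i < k * u.length) :
    (replicate k u).flatten[i]? = u[i % u.length]? := by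
  induction k generalizing i with
  | zero => simp at h
  | succ k ih =>
    rw [replicate_succ, flatten_cons, getElem?_append]
    split_ifs with hi
    · rw [Nat.mod_eq_of_lt hi]
    · rw [ih (by rw [Nat.succ_mul] at h; omega), ← Nat.mod_eq_sub_mod (not_lt.1 hi)]

theorem OccursAt.rotate_of_replicate {x : ℤ → A} {u : List A} {k : ℕ} {p : ℤ}
    (hp : OccursAt x (replicate (k + 1) u).flatten p) {t : ℕ} (ht : t ≤ k * u.length) :
    OccursAt x (u.rotate t) (p + t) := by
  rw [occursAt_iff] at hp ⊢
  intro j hj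
  rw [length_rotate] at hj
  have htj : t + j < (k + 1) * u.length := by rw [Nat.succ_mul]; omega
  have hflat := getElem?_flatten_replicate u htj
  rw [getElem?_eq_getElem (by simpa using htj), getElem?_eq_getElem (Nat.mod_lt _ (by omega)),
    Option.some_inj] at hflat
  rw [getElem_rotate, add_assoc, ← Nat.cast_add, hp _ (by simpa using htj), hflat, Nat.add_comm]

theorem LinRec.exists_occursAt_rotate [DecidableEq A] {x : ℤ → A} {K : ℕ} (hlr : LinRec x K)
    {u : List A} (hu : FactorOf x (replicate (K + 1) u).flatten) (i : ℤ) :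
    ∃ t, OccursAt x (u.rotate t) i := by
  obtain ⟨p, hip, hp⟩ := hlr.1 _ hu i
  have hv := occursAt_seg x i (i + u.length)
  obtain ⟨q, hpq, hq, hocc⟩ := hlr.exists_occursAt_Ioc_of_le hv hip
  have hlen : (seg x i (i + u.length)).length = u.length := by simp
  rw [hlen] at hq
  have hrot := OccursAt.rotate_of_replicate hp (t := (q - p).toNat) (by omega)
  rw [Int.toNat_of_nonneg (by omega), add_sub_cancel] at hrot
  exact ⟨_, hocc.eq_of_length_eq hrot (by simp [hlen]) ▸ hv⟩

theorem eq_of_cons_perm_concat {c d : A} {w : List A} (h : c :: w ~ w ++ [d]) : c = d := by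
  have : [c] ++ w ~ [d] ++ w := h.trans (perm_append_singleton d w)
  simpa using (perm_append_right_iff w).1 this

theorem periodic_of_forall_occursAt_perm {x : ℤ → A} {u : List A}
    (h : ∀ i, ∃ v, v ~ u ∧ OccursAt x v i) (i : ℤ) : x (i + u.length) = x i := by
  obtain rfl | hu := eq_or_ne u []
  · simp
  have hn : 0 < u.length := length_pos_iff.2 hu
  obtain ⟨v₁, hv₁, hocc₁⟩ := h i
  obtain ⟨v₂, hv₂, hocc₂⟩ := h (i + 1)
  rw [OccursAt, hv₁.length_eq] at hocc₁
  rw [OccursAt, hv₂.length_eq] at hocc₂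
  rw [seg_eq_cons x (by omega)] at hocc₁
  rw [show i + 1 + u.length = i + u.length + 1 by ring, seg_eq_concat x (by omega)] at hocc₂
  subst hocc₁ hocc₂
  exact (eq_of_cons_perm_concat (hv₁.trans hv₂.symm)).symm

end Words

theorem stmt7 {A : Type*} [DecidableEq A] (x : ℤ → A) (K : ℕ)
    (hap : AperiodicSeq x) (hlr : LinRec x K) : PowerFree x (K + 1) := by
  intro u hu hpow
  have hper := periodic_of_forall_occursAt_perm fun i => by
    obtain ⟨t, ht⟩ := hlr.exists_occursAt_rotate hpow i
    exact ⟨_, u.rotate_perm t, ht⟩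
  exact hap ⟨u.length, by simpa using length_pos_iff.2 hu, hper⟩
end

section
/- Let σ : A* → A* be a primitive morphism on a finite alphabet A of size d, prolongable on a letter a. Then every return word in the language of σ to any word of length 2 has length at most 2·|σ|^{2d²}. -/
open List

/-!
Since `σ` is primitive and `σ(a)` starts with `a`, every letter occurs in `σᵐ(c)` for every
`c` once `m ≥ 2(d - 1)`: walk from `c` to `a`, loop at `a`, walk from `a` to the letter, where
shortest walks have length `< d` by the pigeonhole principle. A two-letter factor of `σⁿ(c)`
has, at every level above it, an ancestor that is a letter or a factor `xy` of length two;
pigeonholing these `d²` pairs shows that every two-letter word `u` of the language occurs in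
some `σⁿ(c)` with `n ≤ d²`, hence in every `σᵀ(e)` with `T = 2d²`.

If `ru` is a factor of `σⁿ(c)` with `n ≥ T`, then `σⁿ(c)` is a concatenation of blocks `σᵀ(e)`
of length at most `|σ|ᵀ`; were `|ru| > 2|σ|ᵀ`, the word `ru` stripped of its first and last
letters would contain a whole block, hence a third occurrence of `u`.
-/

section Iteration

variable {A : Type*} (σ : A → List A)

theorem iterate_applyW (n : ℕ) (w : List A) :
    (applyW σ)^[n] w = w.flatMap (powL σ n) := by
  induction n generalizing w with
  | zero => exact (List.flatMap_singleton' w).symm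
  | succ n ih =>
    rw [Function.iterate_succ_apply, ih, applyW, List.flatMap_assoc]
    congr 1
    funext c
    change _ = (applyW σ)^[n] (applyW σ [c])
    rw [ih, applyW, List.flatMap_singleton]

theorem powL_add (m n : ℕ) (c : A) :
    powL σ (m + n) c = (powL σ n c).flatMap (powL σ m) := by
  change (applyW σ)^[m + n] [c] = _
  rw [Function.iterate_add_apply, iterate_applyW]
  rfl

theorem powL_one (c : A) : powL σ 1 c = σ c := by
  simp [powL, applyW]

variable {σ}

theorem mem_powL_add {m n : ℕ} {b c : A} :
    b ∈ powL σ (m + n) c ↔ ∃ e ∈ powL σ n c, b ∈ powL σ m e := by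
  rw [powL_add, List.mem_flatMap]

theorem infix_powL_add {m n : ℕ} {w : List A} {c e : A} (hw : w <:+: powL σ m e)
    (he : e ∈ powL σ n c) : w <:+: powL σ (m + n) c :=
  powL_add σ m n c ▸ hw.trans (List.infix_flatMap_of_mem he _)

theorem NonErasing.powL_ne_nil (hσ : NonErasing σ) (n : ℕ) (c : A) : powL σ n c ≠ [] := by
  induction n generalizing c with
  | zero => simp [powL]
  | succ n ih =>
    obtain ⟨e, he⟩ := List.exists_mem_of_ne_nil _ (hσ c)
    rw [powL_add, powL_one, Ne, List.flatMap_eq_nil_iff]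
    exact fun h => ih e (h e he)

end Iteration

theorem List.length_flatMap_le {α β : Type*} {l : List α} {f : α → List β} {B : ℕ}
    (h : ∀ a ∈ l, (f a).length ≤ B) : (l.flatMap f).length ≤ l.length * B := by
  simpa using List.sum_le_card_nsmul (l.map fun a => (f a).length) B (by simpa using h)

section Length

variable {A : Type*} [Fintype A] {σ : A → List A}

theorem length_le_maxLen_one (c : A) : (σ c).length ≤ maxLen σ 1 := by
  rw [← powL_one σ c]
  exact Finset.le_sup (f := fun c => (powL σ 1 c).length) (Finset.mem_univ c)

theorem NonErasing.one_le_maxLen (hσ : NonErasing σ) (c : A) : 1 ≤ maxLen σ 1 :=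
  (List.length_pos_iff.2 (hσ c)).trans_le (length_le_maxLen_one c)

theorem length_powL_le (n : ℕ) (c : A) : (powL σ n c).length ≤ maxLen σ 1 ^ n := by
  induction n generalizing c with
  | zero => simp [powL]
  | succ n ih =>
    rw [powL_add, powL_one, pow_succ']
    exact (List.length_flatMap_le fun e _ => ih e).trans
      (Nat.mul_le_mul_right _ (length_le_maxLen_one c))

end Length

theorem Fintype.exists_lt_map_eq_of_card_lt {α : Type*} [Fintype α] {N : ℕ} (f : Fin N → α)
    (h : Fintype.card α < N) : ∃ i j, i < j ∧ f i = f j := by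
  obtain ⟨i, j, hij, hf⟩ := Fintype.exists_ne_map_eq_of_card_lt f (by simpa using h)
  rcases hij.lt_or_gt with hlt | hlt
  · exact ⟨i, j, hlt, hf⟩
  · exact ⟨j, i, hlt, hf.symm⟩

section Letters

variable {A : Type*} {σ : A → List A}

theorem exists_lt_card_mem_powL [Fintype A] {k : ℕ} {b c : A} (h : b ∈ powL σ k c) :
    ∃ k < Fintype.card A, b ∈ powL σ k c := by
  classical
  have hex : ∃ k, b ∈ powL σ k c := ⟨k, h⟩
  refine ⟨Nat.find hex, ?_, Nat.find_spec hex⟩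
  by_contra! hN
  set N := Nat.find hex
  -- the ancestor of `b` at each level `i ≤ N`; two equal ones would shortcut the minimal path
  have hanc : ∀ i : Fin (N + 1), ∃ e ∈ powL σ (N - i) c, b ∈ powL σ i e := fun i =>
    mem_powL_add.1 (by rw [Nat.add_sub_cancel' (Nat.lt_succ_iff.1 i.2)]; exact Nat.find_spec hex)
  choose f hf using hanc
  obtain ⟨i, j, hij, hfij⟩ := Fintype.exists_lt_map_eq_of_card_lt f (Nat.lt_succ_of_le hN)
  have hshort : b ∈ powL σ (i + (N - j)) c :=
    mem_powL_add.2 ⟨f j, (hf j).1, hfij ▸ (hf i).2⟩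
  have := Nat.find_min' hex hshort
  have := j.2
  omega

theorem Prolongable.mem_powL_self {a : A} (ha : Prolongable σ a) (n : ℕ) : a ∈ powL σ n a := by
  induction n with
  | zero => simp [powL]
  | succ n ih =>
    obtain ⟨u, -, hu⟩ := ha
    exact mem_powL_add.2 ⟨a, by simp [powL_one, hu], ih⟩

theorem PrimitiveSub.mem_powL [Fintype A] (hσ : PrimitiveSub σ) {a : A} (ha : Prolongable σ a)
    {m : ℕ} (hm : 2 * (Fintype.card A - 1) ≤ m) (b c : A) : b ∈ powL σ m c := by
  obtain ⟨k, hk⟩ := hσ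
  obtain ⟨k₁, hk₁, hac⟩ := exists_lt_card_mem_powL (hk a c)
  obtain ⟨k₂, hk₂, hba⟩ := exists_lt_card_mem_powL (hk b a)
  have h := mem_powL_add.2 ⟨a, mem_powL_add.2 ⟨a, hac, ha.mem_powL_self (m - k₁ - k₂)⟩, hba⟩
  rwa [show k₂ + (m - k₁ - k₂ + k₁) = m by omega] at h

theorem PrimitiveSub.nonErasing [Fintype A] (hσ : PrimitiveSub σ) {a : A}
    (ha : Prolongable σ a) : NonErasing σ := by
  intro c hc
  have h := hσ.mem_powL ha (m := 2 * Fintype.card A + 1) (by omega) a c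
  rw [powL_add, powL_one, hc, List.flatMap_nil] at h
  exact List.not_mem_nil h

end Letters

theorem List.infix_flatMap_of_length_le_two {α β : Type*} {τ : α → List β}
    (hτ : ∀ e, τ e ≠ []) {u : List β} (hu₀ : u ≠ []) (hu : u.length ≤ 2) {w : List α}
    (h : u <:+: w.flatMap τ) :
    (∃ e ∈ w, u <:+: τ e) ∨ ∃ x y, [x, y] <:+: w ∧ u <:+: τ x ++ τ y := by
  induction w with
  | nil => exact absurd (List.infix_nil.1 h) hu₀
  | cons e w ih =>
    rw [List.flatMap_cons, List.infix_append_iff_ne_nil] at h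
    rcases h with h | h | ⟨l₁, l₂, hl₁, hl₂, rfl, hs, hp⟩
    · exact Or.inl ⟨e, List.mem_cons_self, h⟩
    · rcases ih h with ⟨e', he', h'⟩ | ⟨x, y, hxy, h'⟩
      · exact Or.inl ⟨e', List.mem_cons_of_mem _ he', h'⟩
      · exact Or.inr ⟨x, y, List.infix_cons hxy, h'⟩
    · obtain ⟨e', w', rfl⟩ : ∃ e' w', w = e' :: w' := by
        cases w with
        | nil => exact absurd (List.prefix_nil.1 hp) hl₂
        | cons e' w' => exact ⟨e', w', rfl⟩
      rw [List.flatMap_cons] at hp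
      -- `l₁ ≠ []` leaves at most one letter for `l₂`, which therefore fits in the block `τ e'`
      have hp' : l₂ <+: τ e' := List.prefix_of_prefix_length_le hp (List.prefix_append _ _) (by
        have := List.length_pos_iff.2 hl₁
        have := List.length_pos_iff.2 (hτ e')
        rw [List.length_append] at hu
        omega)
      exact Or.inr ⟨e, e', ⟨[], w', rfl⟩,
        List.infix_append_iff.2 (Or.inr (Or.inr ⟨l₁, l₂, rfl, hs, hp'⟩))⟩

section Pairs

variable {A : Type*} [Fintype A] {σ : A → List A}

theorem NonErasing.exists_le_sq_infix_powL (hσ : NonErasing σ) {u : List A} (hu : u.length = 2)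
    (hL : LangOf σ u) : ∃ n ≤ Fintype.card A ^ 2, ∃ c, u <:+: powL σ n c := by
  classical
  refine ⟨Nat.find hL, ?_, Nat.find_spec hL⟩
  by_contra! hN
  set N := Nat.find hL
  obtain ⟨c, hc⟩ := Nat.find_spec hL
  have hu₀ : u ≠ [] := List.ne_nil_of_length_pos (by omega)
  -- by minimality of `N`, the ancestor of `u` at each level `i < N` is a pair of letters
  have hanc : ∀ i : Fin N, ∃ p : A × A,
      [p.1, p.2] <:+: powL σ (N - i) c ∧ u <:+: powL σ i p.1 ++ powL σ i p.2 := by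
    intro i
    have hsplit := powL_add σ i (N - i) c
    rw [Nat.add_sub_cancel' i.2.le] at hsplit
    rcases List.infix_flatMap_of_length_le_two (hσ.powL_ne_nil i) hu₀ hu.le (hsplit ▸ hc) with
      ⟨e, -, he⟩ | ⟨x, y, hxy, hu'⟩
    · exact absurd (Nat.find_min' hL ⟨e, he⟩) (by simp [N])
    · exact ⟨(x, y), hxy, hu'⟩
  choose f hf using hanc
  obtain ⟨i, j, hij, hfij⟩ :=
    Fintype.exists_lt_map_eq_of_card_lt f (by rwa [Fintype.card_prod, ← sq])
  have hshort : u <:+: powL σ (i + (N - j)) c := by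
    rw [powL_add]
    refine (hf i).2.trans ?_
    rw [hfij]
    simpa using (hf j).1.flatMap (powL σ i)
  have := Nat.find_min' hL ⟨c, hshort⟩
  have := j.2
  omega

theorem PrimitiveSub.infix_powL (hσ : PrimitiveSub σ) {a : A} (ha : Prolongable σ a)
    {u : List A} (hu : u.length = 2) (hL : LangOf σ u) {m : ℕ}
    (hm : 2 * Fintype.card A ^ 2 ≤ m) (b : A) : u <:+: powL σ m b := by
  obtain ⟨n, hn, c, hc⟩ := (hσ.nonErasing ha).exists_le_sq_infix_powL hu hL
  have hd : 2 * (Fintype.card A - 1) ≤ Fintype.card A ^ 2 := by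
    rcases Fintype.card A with _ | d
    · simp
    · simp only [Nat.add_sub_cancel]
      nlinarith
  have h := infix_powL_add hc (hσ.mem_powL ha (m := m - n) (by omega) c b)
  rwa [Nat.add_sub_cancel' (by omega)] at h

end Pairs

theorem List.infix_of_append_eq_append {α : Type*} {p m s x y z : List α}
    (h : p ++ m ++ s = x ++ y ++ z) (hp : p.length ≤ x.length)
    (hm : x.length + y.length ≤ p.length + m.length) : y <:+: m := by
  obtain ⟨x', rfl⟩ : p <+: x :=
    List.prefix_of_prefix_length_le (l₃ := x ++ y ++ z) ⟨m ++ s, by rw [← h, List.append_assoc]⟩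
      ⟨y ++ z, by rw [List.append_assoc]⟩ hp
  have h' : m ++ s = x' ++ y ++ z := by simpa using h
  have hx' : x' ++ y <+: m :=
    List.prefix_of_prefix_length_le ⟨z, h'.symm⟩ ⟨s, rfl⟩ (by simp at hm ⊢; omega)
  exact List.infix_append_right.trans hx'.isInfix

theorem List.exists_infix_of_flatMap {α β : Type*} {g : α → List β} {B : ℕ}
    (hB : ∀ e, (g e).length ≤ B) (hB₀ : 0 < B) {v : List α}
    {p m s : List β} (h : p ++ m ++ s = v.flatMap g) (hm : 2 * B ≤ m.length + 1) :
    ∃ e ∈ v, g e <:+: m := by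
  induction v generalizing p with
  | nil =>
    have := congrArg List.length h
    simp only [List.length_append, List.flatMap_nil, List.length_nil] at this
    omega
  | cons e v ih =>
    rw [List.flatMap_cons] at h
    by_cases hpe : (g e).length ≤ p.length
    · obtain ⟨p', rfl⟩ : g e <+: p :=
        List.prefix_of_prefix_length_le ⟨v.flatMap g, h.symm⟩ ⟨m ++ s, by simp⟩ hpe
      obtain ⟨e', he', h'⟩ := ih (p := p') (by simpa using h)
      exact ⟨e', List.mem_cons_of_mem _ he', h'⟩
    rcases eq_or_ne p [] with rfl | hp
    · exact ⟨e, List.mem_cons_self,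
        List.infix_of_append_eq_append (x := []) (by simpa using h) le_rfl
          (by have := hB e; simp only [List.length_nil]; omega)⟩
    -- `m` starts inside the block `g e`, so it contains the next block entirely
    cases v with
    | nil =>
      have hlen := congrArg List.length h
      have := hB e
      have := List.length_pos_iff.2 hp
      simp only [List.length_append, List.flatMap_nil, List.length_nil] at hlen
      omega
    | cons e' v =>
      rw [List.flatMap_cons, ← List.append_assoc] at h
      have := hB e
      have := hB e'
      have := List.length_pos_iff.2 hp
      exact ⟨e', by simp, List.infix_of_append_eq_append h (by omega) (by omega)⟩

theorem card_le_occCount {α : Type*} [DecidableEq α] {u w : List α} (S : Finset ℕ)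
    (hS : ∀ i ∈ S, i ≤ w.length ∧ u <+: w.drop i) : S.card ≤ occCount u w := by
  classical
  rw [occCount, List.countP_eq_length_filter]
  refine (Finset.card_le_card fun i hi => ?_).trans (List.toFinset_card_le _)
  obtain ⟨hi, hu⟩ := hS i hi
  simpa [Nat.lt_succ_iff] using ⟨hi, hu⟩

theorem three_le_occCount {α : Type*} [DecidableEq α] {u r p m s : List α}
    (hu : u <+: r ++ u) (h : r ++ u = p ++ m ++ s) (hp : p ≠ []) (hs : s ≠ [])
    (hm : u <:+: m) : 3 ≤ occCount u (r ++ u) := by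
  obtain ⟨m₁, m₂, rfl⟩ := hm
  have hlen := congrArg List.length h
  have := List.length_pos_iff.2 hp
  have := List.length_pos_iff.2 hs
  simp only [List.length_append] at hlen
  have hcard : ({0, p.length + m₁.length, r.length} : Finset ℕ).card = 3 := by
    rw [Finset.card_insert_of_notMem (by simp; omega), Finset.card_pair (by omega)]
  refine hcard ▸ card_le_occCount _ ?_
  simp only [Finset.mem_insert, Finset.mem_singleton, forall_eq_or_imp, forall_eq,
    List.length_append, List.drop_zero, List.drop_left]
  refine ⟨⟨by omega, hu⟩, ⟨by omega, ?_⟩, by omega, List.prefix_rfl⟩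
  rw [h, show p ++ (m₁ ++ u ++ m₂) ++ s = (p ++ m₁) ++ (u ++ (m₂ ++ s)) by simp,
    List.drop_left' (by simp)]
  exact List.prefix_append _ _

theorem NonErasing.length_add_length_le_of_returnWordLang {A : Type*} [Fintype A]
    [DecidableEq A] {σ : A → List A} (hσ : NonErasing σ) {T : ℕ} {u r : List A}
    (hT : ∀ e, u <:+: powL σ T e) (hr : ReturnWordLang σ u r) :
    r.length + u.length ≤ 2 * maxLen σ 1 ^ T := by
  obtain ⟨⟨n, c, hc⟩, hpre, hocc⟩ := hr
  have hM : 1 ≤ maxLen σ 1 ^ T := Nat.one_le_pow _ _ (hσ.one_le_maxLen c)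
  rw [← List.length_append]
  rcases lt_or_ge n T with hn | hn
  · calc (r ++ u).length ≤ maxLen σ 1 ^ n := hc.length_le.trans (length_powL_le n c)
      _ ≤ maxLen σ 1 ^ T := Nat.pow_le_pow_right (hσ.one_le_maxLen c) hn.le
      _ ≤ 2 * maxLen σ 1 ^ T := by omega
  by_contra! hlong
  obtain ⟨x, w, hxw⟩ :=
    List.exists_cons_of_ne_nil (List.ne_nil_of_length_pos (l := r ++ u) (by omega))
  obtain ⟨m, y, rfl⟩ : ∃ m y, w = m ++ [y] := by
    rcases List.eq_nil_or_concat w with rfl | ⟨m, y, rfl⟩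
    · rw [hxw, List.length_singleton] at hlong
      omega
    · exact ⟨m, y, List.concat_eq_append ..⟩
  have hmlen : 2 * maxLen σ 1 ^ T ≤ m.length + 1 := by
    rw [hxw] at hlong
    simp only [List.length_cons, List.length_append, List.length_nil] at hlong
    omega
  obtain ⟨s, t, hst⟩ := hc
  rw [← Nat.add_sub_cancel' hn, powL_add, hxw] at hst
  obtain ⟨e, -, he⟩ := List.exists_infix_of_flatMap (length_powL_le T) hM
    (p := s ++ [x]) (s := [y] ++ t) (by simpa using hst) hmlen
  have := three_le_occCount (p := [x]) (s := [y]) hpre (by simp [hxw]) (List.cons_ne_nil _ _)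
    (List.cons_ne_nil _ _) ((hT e).trans he)
  omega

theorem stmt17_general {A : Type*} [Fintype A] [DecidableEq A]
    (σ : A → List A) (hσ : PrimitiveSub σ) (a : A) (ha : Prolongable σ a) :
    ∀ u r : List A, u.length = 2 → LangOf σ u → ReturnWordLang σ u r →
      r.length ≤ 2 * maxLen σ 1 ^ (2 * Fintype.card A ^ 2) := by
  intro u r hu hL hr
  have := (hσ.nonErasing ha).length_add_length_le_of_returnWordLang
    (hσ.infix_powL ha hu hL le_rfl) hr
  omega

theorem stmt17 {A : Type*} [Fintype A] [Nonempty A] [DecidableEq A]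
    (σ : A → List A) (hσ : PrimitiveSub σ) (a : A) (ha : Prolongable σ a) :
    ∀ u r : List A, u.length = 2 → LangOf σ u → ReturnWordLang σ u r →
      r.length ≤ 2 * maxLen σ 1 ^ (2 * Fintype.card A ^ 2) :=
  stmt17_general σ hσ a ha
end
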